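/- arXiv:math/0109089 — 4 statements merged into one kernel-verified Lean document; each statement's English description precedes it below -/
import Mathlib

section
/- Let s ∈ ℂ with 2s ∉ ℤ. If a, b ∈ ℂ satisfy a·G_+(x,s) + b·G_−(x,s) = 0 for all x ∈ (0,1], then a = b = 0; that is, the two solutions G_+(·,s) and G_−(·,s) of the Yukawa equation are linearly independent on (0,1] when 2s is not an integer. -/
/-!
Write `G_±(x,s) = x^{±s} F_±(x)` with `F_±(x) = Σ b_j^±(s) x^j`, a power series with infinite
radius of convergence and `F_±(0) = 1/Γ(1 ± 2s) ≠ 0`. Multiplying a vanishing combination by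
`x^s` gives `a x^{2s} F_+(x) + b F_-(x) = 0`; if `a ≠ 0`, then `x^{2s}` converges as `x → 0⁺`,
necessarily to `0` since `2s ≠ 0` (the limit `L` of `x^w` satisfies `L = c^w L` for every
`c > 0`, and `c ↦ c^w` is not constant). Then `b = 0`, and `a x^{2s} F_+(x) = 0` forces `a = 0`.
By the symmetry `s ↔ -s`, also `b = 0`.
-/

/-- `b_j^+(s) = (j! Γ(2s+j+1))⁻¹`, with the reciprocal Gamma convention
(Mathlib's `Complex.Gamma` vanishes at its poles). -/
noncomputable def bcoef (s : ℂ) (j : ℕ) : ℂ :=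
  ((j.factorial : ℂ) * Complex.Gamma (2 * s + (j : ℂ) + 1))⁻¹

/-- `G_+(x,s) = Σ_{j=0}^∞ b_j^+(s) x^{s+j}` for `x > 0`. -/
noncomputable def Gp (x : ℝ) (s : ℂ) : ℂ :=
  ∑' j : ℕ, bcoef s j * (x : ℂ) ^ (s + (j : ℂ))

/-- `G_-(x,s) = G_+(x,-s) = Σ_{j=0}^∞ b_j^-(s) x^{-s+j}` for `x > 0`. -/
noncomputable def Gm (x : ℝ) (s : ℂ) : ℂ := Gp x (-s)

open Filter Topology

lemma bcoef_succ (s : ℂ) (j : ℕ) (h : 2 * s + j + 1 ≠ 0) :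
    bcoef s (j + 1) = bcoef s j / ((j + 1) * (2 * s + j + 1)) := by
  have hΓ : Complex.Gamma (2 * s + ↑(j + 1) + 1) =
      (2 * s + j + 1) * Complex.Gamma (2 * s + j + 1) := by
    rw [← Complex.Gamma_add_one _ h]
    push_cast
    ring_nf
  simp only [bcoef, hΓ, Nat.factorial_succ]
  push_cast
  field_simp

lemma summable_norm_bcoef (s : ℂ) : Summable fun j => ‖bcoef s j‖ := by
  refine summable_of_ratio_norm_eventually_le (r := 1 / 2) (by norm_num) ?_
  obtain ⟨N, hN⟩ := exists_nat_ge (‖2 * s‖ + 1)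
  filter_upwards [eventually_ge_atTop N] with j hj
  have hlarge : 2 ≤ ‖2 * s + j + 1‖ := by
    have hj' : (N : ℝ) ≤ j := by exact_mod_cast hj
    have hsub := norm_sub_norm_le ((j : ℂ) + 1) (-(2 * s))
    have hj1 : ‖(j : ℂ) + 1‖ = j + 1 := by norm_cast
    rw [norm_neg, sub_neg_eq_add, hj1, show (j : ℂ) + 1 + 2 * s = 2 * s + j + 1 by ring] at hsub
    linarith
  have hne : 2 * s + j + 1 ≠ 0 := norm_pos_iff.mp (by linarith)
  have hj1 : (1 : ℝ) ≤ ‖((j : ℂ) + 1)‖ := by norm_cast; simp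
  rw [bcoef_succ s j hne, norm_norm, norm_norm, norm_div, norm_mul, div_le_iff₀ (by positivity)]
  have hprod : 2 ≤ ‖(j : ℂ) + 1‖ * ‖2 * s + j + 1‖ := by nlinarith
  nlinarith [mul_le_mul_of_nonneg_left hprod (norm_nonneg (bcoef s j))]

noncomputable def bcoefSeries (s : ℂ) (x : ℝ) : ℂ := ∑' j : ℕ, bcoef s j * (x : ℂ) ^ j

lemma bcoefSeries_zero (s : ℂ) : bcoefSeries s 0 = bcoef s 0 := by
  rw [bcoefSeries, tsum_eq_single 0 fun j hj => by simp [hj]]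
  simp

lemma tendsto_bcoefSeries (s : ℂ) : Tendsto (bcoefSeries s) (𝓝 0) (𝓝 (bcoef s 0)) := by
  have hcont : ContinuousOn (bcoefSeries s) (Set.Icc (-1) 1) := by
    refine continuousOn_tsum (fun j => by fun_prop) (summable_norm_bcoef s) fun j x hx => ?_
    rw [norm_mul, norm_pow, Complex.norm_real]
    exact mul_le_of_le_one_right (norm_nonneg _) (pow_le_one₀ (norm_nonneg x) (abs_le.mpr hx))
  rw [← bcoefSeries_zero]
  exact hcont.continuousAt (Icc_mem_nhds (by norm_num) (by norm_num))

lemma bcoef_zero_ne_zero {s : ℂ} (hs : ∀ m : ℕ, 2 * s + 1 ≠ -m) : bcoef s 0 ≠ 0 := by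
  simpa [bcoef] using Complex.Gamma_ne_zero hs

lemma Gp_eq_cpow_mul_bcoefSeries (s : ℂ) {x : ℝ} (hx : 0 < x) :
    Gp x s = (x : ℂ) ^ s * bcoefSeries s x := by
  have hx0 : (x : ℂ) ≠ 0 := Complex.ofReal_ne_zero.mpr hx.ne'
  simp only [Gp, bcoefSeries, ← tsum_mul_left, Complex.cpow_add _ _ hx0, Complex.cpow_natCast]
  congr 1 with j
  ring

lemma eq_zero_of_tendsto_ofReal_cpow {w L : ℂ} (hw : w ≠ 0)
    (h : Tendsto (fun x : ℝ => (x : ℂ) ^ w) (𝓝[>] 0) (𝓝 L)) : L = 0 := by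
  by_contra hL
  have hconst : ∀ c : ℝ, 0 < c → (c : ℂ) ^ w = 1 := by
    intro c hc
    have hscale : Tendsto (fun x : ℝ => c * x) (𝓝[>] 0) (𝓝[>] 0) := by
      refine tendsto_nhdsWithin_of_tendsto_nhds_of_eventually_within _ ?_ ?_
      · simpa using (tendsto_id (x := 𝓝 (0 : ℝ))).const_mul c |>.mono_left nhdsWithin_le_nhds
      · filter_upwards [self_mem_nhdsWithin] with x hx using mul_pos hc hx
    have hcomp : Tendsto (fun x : ℝ => (c : ℂ) ^ w * (x : ℂ) ^ w) (𝓝[>] 0) (𝓝 L) := by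
      refine (h.comp hscale).congr' ?_
      filter_upwards [self_mem_nhdsWithin] with x hx
      simp [Complex.mul_cpow_ofReal_nonneg hc.le (le_of_lt hx)]
    have := tendsto_nhds_unique (h.const_mul _) hcomp
    exact (mul_eq_right₀ hL).mp this
  have hderiv : HasDerivAt (fun c : ℝ => (c : ℂ) ^ w) (w * 1 ^ (w - 1)) 1 :=
    (Complex.hasStrictDerivAt_cpow_const (by simp)).hasDerivAt.comp_ofReal (z := 1)
  have hderiv0 : HasDerivAt (fun c : ℝ => (c : ℂ) ^ w) 0 1 := by
    refine (hasDerivAt_const (1 : ℝ) (1 : ℂ)).congr_of_eventuallyEq ?_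
    filter_upwards [lt_mem_nhds one_pos] with c hc using hconst c hc
  simpa [hw] using hderiv.unique hderiv0

lemma eq_zero_of_cpow_mul_add_eq_zero {w α β a b : ℂ} {u v : ℝ → ℂ} (hw : w ≠ 0)
    (hu : Tendsto u (𝓝[>] 0) (𝓝 α)) (hα : α ≠ 0)
    (hv : Tendsto v (𝓝[>] 0) (𝓝 β)) (hβ : β ≠ 0)
    (h : ∀ᶠ x : ℝ in 𝓝[>] 0, a * ((x : ℂ) ^ w * u x) + b * v x = 0) : a = 0 := by
  by_contra ha
  have hu0 : ∀ᶠ x in 𝓝[>] 0, u x ≠ 0 := hu.eventually_ne hα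
  have hpow : Tendsto (fun x : ℝ => (x : ℂ) ^ w) (𝓝[>] 0) (𝓝 (-(b * β) / (a * α))) := by
    refine ((hv.const_mul b).neg.div (hu.const_mul a) (mul_ne_zero ha hα)).congr' ?_
    filter_upwards [h, hu0] with x hx hux
    rw [Pi.div_apply, div_eq_iff (mul_ne_zero ha hux)]
    linear_combination -hx
  have hb : b = 0 := by simpa [ha, hα, hβ] using eq_zero_of_tendsto_ofReal_cpow hw hpow
  obtain ⟨x, hx, hux, hxpos⟩ := (h.and (hu0.and self_mem_nhdsWithin)).exists
  have hxpos : (x : ℂ) ≠ 0 := Complex.ofReal_ne_zero.mpr (ne_of_gt hxpos)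
  simp [hb, ha, hux, Complex.cpow_eq_zero_iff, hxpos] at hx

lemma two_mul_neg_ne_intCast {s : ℂ} (hs : ∀ m : ℤ, 2 * s ≠ m) :
    ∀ m : ℤ, 2 * -s ≠ m :=
  fun m hm => hs (-m) (by push_cast; linear_combination -hm)

lemma eq_zero_of_mul_Gp_add_mul_Gm_eq_zero {s a b : ℂ} (hs : ∀ m : ℤ, 2 * s ≠ m)
    (h : ∀ᶠ x in 𝓝[>] 0, a * Gp x s + b * Gm x s = 0) : a = 0 := by
  have hb0 : ∀ t : ℂ, (∀ m : ℤ, 2 * t ≠ m) → bcoef t 0 ≠ 0 := fun t ht =>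
    bcoef_zero_ne_zero fun m hm => ht (-(m + 1)) (by push_cast; linear_combination hm)
  refine eq_zero_of_cpow_mul_add_eq_zero (w := 2 * s) (b := b) (by simpa using hs 0)
    ((tendsto_bcoefSeries s).mono_left nhdsWithin_le_nhds) (hb0 s hs)
    ((tendsto_bcoefSeries (-s)).mono_left nhdsWithin_le_nhds)
    (hb0 (-s) (two_mul_neg_ne_intCast hs)) ?_
  filter_upwards [h, self_mem_nhdsWithin] with x hx hxpos
  have hx0 : (x : ℂ) ≠ 0 := Complex.ofReal_ne_zero.mpr (ne_of_gt hxpos)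
  rw [Gm, Gp_eq_cpow_mul_bcoefSeries s hxpos, Gp_eq_cpow_mul_bcoefSeries (-s) hxpos] at hx
  rw [two_mul, Complex.cpow_add _ _ hx0]
  have hinv : (x : ℂ) ^ s * (x : ℂ) ^ (-s) = 1 := by
    rw [← Complex.cpow_add _ _ hx0, add_neg_cancel, Complex.cpow_zero]
  linear_combination (x : ℂ) ^ s * hx - b * bcoefSeries (-s) x * hinv

/-- if `2s ∉ ℤ`, then `G_+(·,s)` and `G_-(·,s)` are linearly independent
on `(0,1]`: a vanishing linear combination has zero coefficients. -/
theorem Gp_Gm_linearly_independent (s : ℂ) (hs : ∀ m : ℤ, 2 * s ≠ (m : ℂ)) (a b : ℂ)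
    (h : ∀ x : ℝ, 0 < x → x ≤ 1 → a * Gp x s + b * Gm x s = 0) :
    a = 0 ∧ b = 0 := by
  have hnear : ∀ᶠ x in 𝓝[>] 0, a * Gp x s + b * Gm x s = 0 := by
    filter_upwards [Ioc_mem_nhdsGT one_pos] with x hx using h x hx.1 hx.2
  refine ⟨eq_zero_of_mul_Gp_add_mul_Gm_eq_zero hs hnear,
    eq_zero_of_mul_Gp_add_mul_Gm_eq_zero (b := a) (two_mul_neg_ne_intCast hs) ?_⟩
  filter_upwards [hnear] with x hx
  simp only [Gm, neg_neg] at hx ⊢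
  linear_combination hx
end

section
/- Let l ∈ ℕ and suppose G_+(1, l/2) ≠ 0. Then the scattering coefficient S(s) = −G_−(1,s)·Γ(1−2s) / (G_+(1,s)·Γ(1+2s)) of the Yukawa potential has a simple pole at s = l/2 with residue −p_l, where p_l = (−1)^l/(2·l!·(l−1)!); precisely, (s − l/2)·S(s) tends to (−1)^{l+1}/(2·l!·(l−1)!) as s → l/2 through values s ≠ l/2. -/
/-- The Yukawa scattering coefficient
`S(s) = −G_−(1,s)·Γ(1−2s) / (G_+(1,s)·Γ(1+2s))`. -/
noncomputable def Syu (s : ℂ) : ℂ :=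
  -Gm 1 s * Complex.Gamma (1 - 2 * s) / (Gp 1 s * Complex.Gamma (1 + 2 * s))

/-! Near `s = l/2` only `Γ(1 - 2s)` is singular: `1 - 2s` runs through a punctured neighbourhood
of the pole `1 - l` of `Γ`, where `Γ` has residue `(-1)^(l-1)/(l-1)!`. The remaining factor
`-G_-(1,s) / (G_+(1,s) Γ(1+2s))` is continuous at `l/2` with value `-1/l!`: at `s = l/2` the
coefficients `b_j^-` vanish for `j < l` and `b_{j+l}^- = b_j^+`, so `G_-(1,l/2) = G_+(1,l/2)`.
Continuity of `G_+(1,·)` follows from the locally uniform bound `|b_j^+(s)| ≤ M/j!`, itself a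
consequence of `1/|Γ(w + k)| ≤ 1/|Γ(w)|` for `Re w ≥ 1`. -/

open Complex Filter Topology Metric

theorem tendsto_affine_nhdsNE {𝕜 : Type*} [Field 𝕜] [TopologicalSpace 𝕜] [IsTopologicalRing 𝕜]
    {a : 𝕜} (ha : a ≠ 0) (b x : 𝕜) :
    Tendsto (fun z => a * z + b) (𝓝[≠] x) (𝓝[≠] (a * x + b)) :=
  ((affineHomeomorph a b ha).map_punctured_nhds_eq x).le

namespace Complex

theorem norm_inv_Gamma_add_nat_le {w : ℂ} (hw : 1 ≤ w.re) (k : ℕ) :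
    ‖(Gamma (w + k))⁻¹‖ ≤ ‖(Gamma w)⁻¹‖ := by
  induction k with
  | zero => simp
  | succ k ih =>
    have hre : 1 ≤ (w + k).re := by
      simp only [add_re, natCast_re]
      linarith [k.cast_nonneg (α := ℝ)]
    have hnorm : 1 ≤ ‖w + k‖ := hre.trans (re_le_norm _)
    have hne : w + k ≠ 0 := norm_pos_iff.mp (one_pos.trans_le hnorm)
    rw [Nat.cast_succ, ← add_assoc, Gamma_add_one _ hne, mul_inv, norm_mul, norm_inv]
    exact (mul_le_of_le_one_left (norm_nonneg _) (inv_le_one_of_one_le₀ hnorm)).trans ih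

theorem tendsto_add_nat_mul_Gamma_nhdsNE_neg_nat (n : ℕ) :
    Tendsto (fun z => (z + n) * Gamma z) (𝓝[≠] (-n : ℂ))
      (𝓝 ((-1) ^ n / n.factorial)) := by
  induction n with
  | zero => simpa using tendsto_self_mul_Gamma_nhds_zero
  | succ n ih =>
    have hshift : Tendsto (· + 1) (𝓝[≠] (-(n + 1 : ℕ) : ℂ)) (𝓝[≠] (-n : ℂ)) := by
      have h := tendsto_affine_nhdsNE one_ne_zero (1 : ℂ) (-(n + 1 : ℕ) : ℂ)
      rw [show 1 * (-(n + 1 : ℕ) : ℂ) + 1 = -n by push_cast; ring] at h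
      simpa only [one_mul] using h
    have hne : (-(n + 1 : ℕ) : ℂ) ≠ 0 := by rw [neg_ne_zero]; exact_mod_cast n.succ_ne_zero
    have hinv : Tendsto (fun z : ℂ => z⁻¹) (𝓝[≠] (-(n + 1 : ℕ) : ℂ)) (𝓝 (-(n + 1 : ℕ) : ℂ)⁻¹) :=
      ((continuousAt_inv₀ hne).tendsto).mono_left nhdsWithin_le_nhds
    have hrec : ∀ᶠ z in 𝓝[≠] (-(n + 1 : ℕ) : ℂ),
        (z + 1 + n) * Gamma (z + 1) * z⁻¹ = (z + (n + 1 : ℕ)) * Gamma z := by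
      filter_upwards [nhdsWithin_le_nhds (isOpen_ne.mem_nhds hne)] with z hz
      rw [Gamma_add_one z hz]
      field_simp
      push_cast
      ring
    convert ((ih.comp hshift).mul hinv).congr' hrec using 2
    rw [Nat.factorial_succ]
    push_cast
    field_simp
    ring

end Complex

theorem tendsto_sub_half_nat_mul_Gamma_one_sub_two_mul {l : ℕ} (hl : 0 < l) :
    Tendsto (fun s : ℂ => (s - l / 2) * Gamma (1 - 2 * s)) (𝓝[≠] ((l : ℂ) / 2))
      (𝓝 ((-1) ^ l / (2 * (l - 1).factorial))) := by
  obtain ⟨n, rfl⟩ := Nat.exists_eq_add_one_of_ne_zero hl.ne'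
  have hmap : Tendsto (fun s : ℂ => -2 * s + 1) (𝓝[≠] (((n + 1 : ℕ) : ℂ) / 2))
      (𝓝[≠] (-n : ℂ)) := by
    have h := tendsto_affine_nhdsNE (by norm_num : (-2 : ℂ) ≠ 0) 1 (((n + 1 : ℕ) : ℂ) / 2)
    rwa [show -2 * (((n + 1 : ℕ) : ℂ) / 2) + 1 = -n by push_cast; ring] at h
  convert ((Complex.tendsto_add_nat_mul_Gamma_nhdsNE_neg_nat n).comp hmap).const_mul (-1 / 2 : ℂ)
    using 2 with s
  · simp only [Function.comp_apply]
    push_cast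
    ring_nf
  · simp only [Nat.add_sub_cancel]
    field_simp
    ring

theorem tendsto_Gamma_one_add_two_mul_half_nat (l : ℕ) :
    Tendsto (fun s : ℂ => Gamma (1 + 2 * s)) (𝓝 ((l : ℂ) / 2)) (𝓝 l.factorial) := by
  have hval : 1 + 2 * ((l : ℂ) / 2) = l + 1 := by ring
  have h := ((differentiableAt_Gamma_nat_add_one l).continuousAt.comp_of_eq
    (by fun_prop : ContinuousAt (fun s : ℂ => 1 + 2 * s) _) hval).tendsto
  simpa only [Function.comp_def, hval, Gamma_nat_eq_factorial] using h

theorem continuous_bcoef (j : ℕ) : Continuous fun s => bcoef s j := by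
  simp only [bcoef, mul_inv]
  exact continuous_const.mul (differentiable_one_div_Gamma.continuous.comp (by fun_prop))

theorem exists_norm_bcoef_le (s₀ : ℂ) :
    ∃ M : ℝ, ∀ᶠ j in cofinite, ∀ s ∈ closedBall s₀ 1, ‖bcoef s j‖ ≤ M / j.factorial := by
  obtain ⟨N, hN⟩ := exists_nat_ge (2 * ‖s₀‖ + 2)
  have hre : ∀ s ∈ closedBall s₀ 1, 1 ≤ (2 * s + N + 1).re := by
    intro s hs
    have h₁ := norm_le_of_mem_closedBall hs
    have h₂ := neg_le_of_abs_le (abs_re_le_norm s)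
    simp only [add_re, mul_re, natCast_re, one_re, re_ofNat, im_ofNat, zero_mul, sub_zero]
    linarith
  obtain ⟨M, hM⟩ := (isCompact_closedBall s₀ 1).exists_bound_of_continuousOn
    (differentiable_one_div_Gamma.continuous.comp (f := fun s : ℂ => 2 * s + N + 1)
      (by fun_prop)).continuousOn
  refine ⟨M, ?_⟩
  rw [Nat.cofinite_eq_atTop, eventually_atTop]
  refine ⟨N, fun j hj s hs => ?_⟩
  obtain ⟨k, rfl⟩ := Nat.exists_eq_add_of_le hj
  have hshift : 2 * s + ((N + k : ℕ) : ℂ) + 1 = 2 * s + N + 1 + k := by push_cast; ring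
  rw [bcoef, hshift, mul_inv, norm_mul, norm_inv, norm_natCast, div_eq_inv_mul]
  gcongr
  exact (Complex.norm_inv_Gamma_add_nat_le (hre s hs) k).trans (hM s hs)

theorem continuous_tsum_bcoef : Continuous fun s => ∑' j, bcoef s j := by
  refine continuous_iff_continuousAt.2 fun s₀ => ?_
  obtain ⟨M, hM⟩ := exists_norm_bcoef_le s₀
  have hsum : Summable fun j : ℕ => M / j.factorial := by
    simpa [div_eq_mul_inv] using (Real.summable_pow_div_factorial 1).mul_left M
  refine ((tendstoUniformlyOn_tsum_of_cofinite_eventually hsum hM).continuousOn ?_).continuousAt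
    (closedBall_mem_nhds s₀ one_pos)
  exact Frequently.of_forall fun t =>
    continuousOn_finsetSum _ fun j _ => (continuous_bcoef j).continuousOn

theorem Gp_one_eq_tsum (s : ℂ) : Gp 1 s = ∑' j, bcoef s j := by
  simp [Gp, one_cpow]

theorem continuous_Gp_one : Continuous (Gp 1) := by
  simpa only [funext Gp_one_eq_tsum] using continuous_tsum_bcoef

theorem bcoef_half_nat (l j : ℕ) :
    bcoef ((l : ℂ) / 2) j = ((j.factorial : ℂ) * (l + j).factorial)⁻¹ := by
  rw [bcoef, show 2 * ((l : ℂ) / 2) + j + 1 = ((l + j : ℕ) : ℂ) + 1 by push_cast; ring,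
    Gamma_nat_eq_factorial]

theorem bcoef_neg_half_nat_of_lt {l j : ℕ} (hj : j < l) : bcoef (-((l : ℂ) / 2)) j = 0 := by
  rw [bcoef, show 2 * -((l : ℂ) / 2) + j + 1 = -((l - 1 - j : ℕ) : ℂ) by
    push_cast [Nat.cast_sub (by omega : j ≤ l - 1), Nat.cast_sub (by omega : 1 ≤ l)]; ring,
    Gamma_neg_nat_eq_zero, mul_zero, inv_zero]

theorem bcoef_neg_half_nat_add (l j : ℕ) :
    bcoef (-((l : ℂ) / 2)) (j + l) = bcoef ((l : ℂ) / 2) j := by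
  rw [bcoef_half_nat, bcoef, show 2 * -((l : ℂ) / 2) + ((j + l : ℕ) : ℂ) + 1 = (j : ℂ) + 1 by
    push_cast; ring, Gamma_nat_eq_factorial, add_comm j l, mul_comm]

theorem Gm_one_half_nat_eq_Gp_one (l : ℕ) : Gm 1 ((l : ℂ) / 2) = Gp 1 ((l : ℂ) / 2) := by
  rw [Gm, Gp_one_eq_tsum, Gp_one_eq_tsum, ← (add_left_injective l).tsum_eq]
  · simp only [bcoef_neg_half_nat_add]
  · intro j hj
    have : l ≤ j := not_lt.1 fun h => hj (bcoef_neg_half_nat_of_lt h)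
    exact ⟨j - l, by simp only; omega⟩

/-- if `G_+(1,l/2) ≠ 0` then `S(s)` has a simple pole at `s = l/2`:
`(s − l/2)·S(s) → (−1)^{l+1}/(2·l!·(l−1)!)` as `s → l/2`, `s ≠ l/2`. -/
theorem Syu_simple_pole_at_half_integers (l : ℕ) (hl : 0 < l)
    (hG : Gp 1 ((l : ℂ) / 2) ≠ 0) :
    Filter.Tendsto (fun s : ℂ => (s - (l : ℂ) / 2) * Syu s)
      (nhdsWithin ((l : ℂ) / 2) {(l : ℂ) / 2}ᶜ)
      (nhds ((-1 : ℂ) ^ (l + 1) /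
        (2 * (l.factorial : ℂ) * ((l - 1).factorial : ℂ)))) := by
  have hGp := continuous_Gp_one.continuousAt (x := (l : ℂ) / 2)
  have hGm : ContinuousAt (fun s => Gm 1 s) ((l : ℂ) / 2) :=
    (continuous_Gp_one.comp continuous_neg).continuousAt
  rw [ContinuousAt, Gm_one_half_nat_eq_Gp_one] at hGm
  have hΓ := tendsto_Gamma_one_add_two_mul_half_nat l
  have hfac : (l.factorial : ℂ) ≠ 0 := by exact_mod_cast l.factorial_ne_zero
  have hlim := (tendsto_sub_half_nat_mul_Gamma_one_sub_two_mul hl).mul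
    ((hGm.neg.div (hGp.tendsto.mul hΓ) (mul_ne_zero hG hfac)).mono_left nhdsWithin_le_nhds)
  convert hlim using 2 with s
  · simp only [Syu, Pi.div_apply]
    ring
  · field_simp
    ring
end

section
/- Let s ∈ ℂ with Re(s) = 0 and s ≠ 0, and suppose G_+(1,s) ≠ 0. Define S(s) = −G_−(1,s)·Γ(1−2s)/(G_+(1,s)·Γ(1+2s)) and u(x) = Γ(1−2s)·G_−(x,s) + S(s)·Γ(1+2s)·G_+(x,s) for x > 0. Then u satisfies x²u'' + xu' − (x+s²)u = 0 on (0,∞), u(1) = 0, and there exists C ≥ 0 such that |u(x) − x^{−s} − S(s)·x^{s}| ≤ C·x for all x ∈ (0,1]. -/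
/-- The generalized eigenfunction
`u(x) = Γ(1−2s)·G_−(x,s) + S(s)·Γ(1+2s)·G_+(x,s)`. -/
noncomputable def uScat (s : ℂ) (x : ℝ) : ℂ :=
  Complex.Gamma (1 - 2 * s) * Gm x s + Syu s * Complex.Gamma (1 + 2 * s) * Gp x s

/-!
`G_±(x,s) = x^{±s} F_±(x)` with `F_±` entire power series whose coefficients satisfy
`(j+1)(±2s+j+1) b_{j+1} = b_j`. This recurrence is the equation `x F'' + (±2s+1) F' - F = 0`,
which is exactly what makes `x^{±s} F_±` solve `x²u'' + xu' - (x+s²)u = 0`; hence so does `u`.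
`S(s)` is chosen so that `u(1) = 0`. Finally `Γ(1 ∓ 2s) b_0^∓(s) = 1` and `|x^{±s}| = 1` for
`Re s = 0`, so `u - x^{-s} - S x^{s} = Γ(1-2s) x^{-s} (F_- - b_0^-) + S Γ(1+2s) x^{s} (F_+ - b_0^+)`
is `O(x)`.
-/

open Complex Filter

namespace Yukawa

noncomputable def powSeries (c : ℕ → ℂ) (x : ℝ) : ℂ := ∑' j : ℕ, c j * (x : ℂ) ^ j

def derivCoeff (c : ℕ → ℂ) (j : ℕ) : ℂ := ((j : ℂ) + 1) * c (j + 1)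

def EntireCoeffs (c : ℕ → ℂ) : Prop := ∀ R : ℝ, 0 ≤ R → Summable fun j => ‖c j‖ * R ^ j

variable {c : ℕ → ℂ}

theorem norm_natCast_add_one (j : ℕ) : ‖(j : ℂ) + 1‖ = j + 1 := by
  exact_mod_cast Complex.norm_natCast (j + 1)

theorem EntireCoeffs.of_recurrence {a : ℂ}
    (h : ∀ j : ℕ, ((j : ℂ) + 1) * (a + j + 1) * c (j + 1) = c j) : EntireCoeffs c := by
  intro R hR
  refine summable_of_ratio_norm_eventually_le (r := 1 / 2) (by norm_num) ?_
  filter_upwards [eventually_ge_atTop ⌈2 * R + ‖a‖⌉₊] with j hj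
  have hj : 2 * R + ‖a‖ ≤ j := Nat.ceil_le.mp hj
  have hnorm : (j : ℝ) + 1 - ‖a‖ ≤ ‖a + j + 1‖ := by
    have h1 := Complex.re_le_norm (a + j + 1)
    have h2 := (abs_le.mp (Complex.abs_re_le_norm a)).1
    simp only [add_re, natCast_re, one_re] at h1
    linarith
  have hbig : 2 * R ≤ ‖((j : ℂ) + 1) * (a + j + 1)‖ := by
    rw [norm_mul, norm_natCast_add_one]
    nlinarith [norm_nonneg a]
  simp only [norm_mul, norm_pow, Real.norm_eq_abs, abs_norm, abs_of_nonneg hR]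
  rw [← h j, norm_mul, pow_succ]
  nlinarith [mul_le_mul_of_nonneg_right hbig (by positivity : 0 ≤ ‖c (j + 1)‖ * R ^ j)]

theorem EntireCoeffs.derivCoeff (hc : EntireCoeffs c) : EntireCoeffs (derivCoeff c) := by
  intro R hR
  have hs := (summable_nat_add_iff 1).mpr (hc (2 * (R + 1)) (by positivity))
  refine hs.of_nonneg_of_le (fun j => by positivity) fun j => ?_
  have h2 : (j : ℝ) + 1 ≤ 2 ^ (j + 1) := by exact_mod_cast (Nat.lt_two_pow_self).le
  have hR' : R ^ j ≤ (R + 1) ^ (j + 1) :=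
    (pow_le_pow_left₀ hR (by linarith) j).trans (pow_le_pow_right₀ (by linarith) (by omega))
  rw [Yukawa.derivCoeff, norm_mul, norm_natCast_add_one, mul_pow]
  nlinarith [mul_le_mul h2 hR' (by positivity) (by positivity), norm_nonneg (c (j + 1))]

theorem EntireCoeffs.summable (hc : EntireCoeffs c) (x : ℝ) :
    Summable fun j => c j * (x : ℂ) ^ j :=
  .of_norm <| (hc |x| (abs_nonneg x)).congr fun j => by simp

theorem hasDerivAt_powSeries (hc : EntireCoeffs c) (x : ℝ) :
    HasDerivAt (powSeries c) (powSeries (derivCoeff c) x) x := by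
  set R := |x| + 1
  have hx : x ∈ Set.Ioo (-R) R := abs_lt.mp (by simp [R])
  have hu : Summable fun n : ℕ => ‖c n‖ * n * R ^ (n - 1) := by
    rw [← summable_nat_add_iff 1]
    refine (hc.derivCoeff R (by positivity)).congr fun j => ?_
    rw [derivCoeff, norm_mul, norm_natCast_add_one]
    push_cast
    ring_nf
  have hbound (n : ℕ) (y : ℝ) (hy : y ∈ Set.Ioo (-R) R) :
      ‖c n * (n * (y : ℂ) ^ (n - 1))‖ ≤ ‖c n‖ * n * R ^ (n - 1) := by
    rw [norm_mul, norm_mul, norm_pow, Complex.norm_natCast, Complex.norm_real, mul_assoc]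
    gcongr
    exact (abs_lt.mpr hy).le
  have hderiv (n : ℕ) (y : ℝ) (_ : y ∈ Set.Ioo (-R) R) :
      HasDerivAt (fun z : ℝ => c n * (z : ℂ) ^ n) (c n * (n * (y : ℂ) ^ (n - 1))) y :=
    ((hasDerivAt_pow n (y : ℂ)).comp_ofReal).const_mul (c n)
  refine (hasDerivAt_tsum_of_isPreconnected hu isOpen_Ioo isPreconnected_Ioo hderiv hbound hx
    (hc.summable x) hx).congr_deriv ?_
  rw [Summable.tsum_eq_zero_add (.of_norm_bounded hu fun n => hbound n x hx)]
  simp only [powSeries, derivCoeff, Nat.cast_zero, zero_mul, mul_zero, zero_add,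
    Nat.cast_add, Nat.cast_one, add_tsub_cancel_right]
  exact tsum_congr fun j => by ring

theorem hasSum_mul_powSeries_derivCoeff (hc : EntireCoeffs c) (x : ℝ) :
    HasSum (fun j => j * c j * (x : ℂ) ^ j) (x * powSeries (derivCoeff c) x) := by
  have h := (hc.derivCoeff.summable x).hasSum.mul_left (x : ℂ)
  have e : (fun j : ℕ => (x : ℂ) * (derivCoeff c j * (x : ℂ) ^ j))
      = fun j => ((j + 1 : ℕ) : ℂ) * c (j + 1) * (x : ℂ) ^ (j + 1) := by
    funext j
    simp only [derivCoeff]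
    push_cast
    ring
  rw [e] at h
  simpa [powSeries] using
    (hasSum_nat_add_iff (f := fun j : ℕ => (j : ℂ) * c j * (x : ℂ) ^ j) 1).mp h

theorem powSeries_ode_of_recurrence {a : ℂ} (hc : EntireCoeffs c)
    (h : ∀ j : ℕ, ((j : ℂ) + 1) * (a + j + 1) * c (j + 1) = c j) (x : ℝ) :
    x * powSeries (derivCoeff (derivCoeff c)) x + (a + 1) * powSeries (derivCoeff c) x
      - powSeries c x = 0 := by
  have hsum := ((hasSum_mul_powSeries_derivCoeff hc.derivCoeff x).add
    ((hc.derivCoeff.summable x).hasSum.mul_left (a + 1))).sub (hc.summable x).hasSum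
  refine hsum.unique ?_
  convert hasSum_zero using 1
  funext j
  rw [← h j]
  simp only [derivCoeff]
  ring

theorem norm_powSeries_sub_le (hc : EntireCoeffs c) {x : ℝ} (hx : |x| ≤ 1) :
    ‖powSeries c x - c 0‖ ≤ (∑' j, ‖c (j + 1)‖) * |x| := by
  have hs : Summable fun j => ‖c (j + 1)‖ :=
    (summable_nat_add_iff (f := fun j => ‖c j‖) 1).mpr <|
      (hc 1 zero_le_one).congr fun j => by rw [one_pow, mul_one]
  rw [powSeries, (hc.summable x).tsum_eq_zero_add]
  simp only [pow_zero, mul_one, add_sub_cancel_left]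
  refine tsum_of_norm_bounded (hs.hasSum.mul_right |x|) fun j => ?_
  rw [norm_mul, norm_pow, Complex.norm_real, Real.norm_eq_abs]
  gcongr
  exact pow_le_of_le_one (abs_nonneg x) hx (by omega)

def IsYukawaSolution (s : ℂ) (u : ℝ → ℂ) : Prop :=
  ∃ u' u'' : ℝ → ℂ,
    (∀ x : ℝ, 0 < x → HasDerivAt u (u' x) x) ∧
    (∀ x : ℝ, 0 < x → HasDerivAt u' (u'' x) x) ∧
    (∀ x : ℝ, 0 < x → (x : ℂ) ^ 2 * u'' x + (x : ℂ) * u' x - ((x : ℂ) + s ^ 2) * u x = 0)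

namespace IsYukawaSolution

variable {s : ℂ} {u v : ℝ → ℂ}

theorem const_mul_add_const_mul (a b : ℂ) (hu : IsYukawaSolution s u)
    (hv : IsYukawaSolution s v) : IsYukawaSolution s fun x => a * u x + b * v x := by
  obtain ⟨u', u'', hu', hu'', hu_eq⟩ := hu
  obtain ⟨v', v'', hv', hv'', hv_eq⟩ := hv
  refine ⟨fun x => a * u' x + b * v' x, fun x => a * u'' x + b * v'' x,
    fun x hx => ((hu' x hx).const_mul a).add ((hv' x hx).const_mul b),
    fun x hx => ((hu'' x hx).const_mul a).add ((hv'' x hx).const_mul b), fun x hx => ?_⟩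
  linear_combination a * hu_eq x hx + b * hv_eq x hx

theorem congr (hu : IsYukawaSolution s u) (huv : Set.EqOn u v (Set.Ioi 0)) :
    IsYukawaSolution s v := by
  obtain ⟨u', u'', hu', hu'', hu_eq⟩ := hu
  refine ⟨u', u'', fun x hx => ?_, hu'', fun x hx => huv hx ▸ hu_eq x hx⟩
  exact (hu' x hx).congr_of_eventuallyEq <|
    eventually_of_mem (Ioi_mem_nhds hx) fun y hy => (huv hy).symm

theorem of_neg (hu : IsYukawaSolution (-s) u) : IsYukawaSolution s u := by
  simpa only [IsYukawaSolution, neg_sq] using hu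

end IsYukawaSolution

theorem hasDerivAt_cpow_mul_powSeries (a : ℂ) (hc : EntireCoeffs c) {x : ℝ} (hx : 0 < x) :
    HasDerivAt (fun y : ℝ => (y : ℂ) ^ a * powSeries c y)
      (a * (x : ℂ) ^ (a - 1) * powSeries c x + (x : ℂ) ^ a * powSeries (derivCoeff c) x) x :=
  ((hasStrictDerivAt_cpow_const (ofReal_mem_slitPlane.2 hx)).hasDerivAt.comp_ofReal).mul
    (hasDerivAt_powSeries hc x)

theorem isYukawaSolution_cpow_mul_powSeries {s : ℂ} (hc : EntireCoeffs c)
    (h : ∀ j : ℕ, ((j : ℂ) + 1) * (2 * s + j + 1) * c (j + 1) = c j) :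
    IsYukawaSolution s fun x => (x : ℂ) ^ s * powSeries c x := by
  have hc' := hc.derivCoeff
  refine ⟨fun x => s * ((x : ℂ) ^ (s - 1) * powSeries c x)
      + (x : ℂ) ^ s * powSeries (derivCoeff c) x,
    fun x => s * ((s - 1) * (x : ℂ) ^ (s - 1 - 1) * powSeries c x
        + (x : ℂ) ^ (s - 1) * powSeries (derivCoeff c) x)
      + (s * (x : ℂ) ^ (s - 1) * powSeries (derivCoeff c) x
        + (x : ℂ) ^ s * powSeries (derivCoeff (derivCoeff c)) x),
    fun x hx => ?_, fun x hx => ?_, fun x hx => ?_⟩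
  · convert hasDerivAt_cpow_mul_powSeries s hc hx using 1
    ring
  · exact ((hasDerivAt_cpow_mul_powSeries (s - 1) hc hx).const_mul s).add
      (hasDerivAt_cpow_mul_powSeries s hc' hx)
  · have hx0 : (x : ℂ) ≠ 0 := ofReal_ne_zero.2 hx.ne'
    simp only [cpow_sub _ _ hx0, cpow_one]
    field_simp
    linear_combination (x : ℂ) ^ s * (x : ℂ) * powSeries_ode_of_recurrence hc h x

end Yukawa

open Yukawa

theorem bcoef_zero (s : ℂ) : bcoef s 0 = (Gamma (1 + 2 * s))⁻¹ := by
  simp [bcoef, add_comm]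

theorem bcoef_recurrence (s : ℂ) (j : ℕ) :
    ((j : ℂ) + 1) * (2 * s + j + 1) * bcoef s (j + 1) = bcoef s j := by
  by_cases hz : 2 * s + j + 1 = 0
  · -- both sides vanish: Mathlib's `Gamma` is `0` at the pole `0`
    simp [bcoef, hz]
  · have hΓ : Gamma (2 * s + ((j + 1 : ℕ) : ℂ) + 1)
        = (2 * s + j + 1) * Gamma (2 * s + j + 1) := by
      rw [← Gamma_add_one _ hz]
      push_cast
      ring_nf
    rw [bcoef, bcoef, hΓ, Nat.factorial_succ, Nat.cast_mul,
      show (((j + 1 : ℕ) : ℂ) * j.factorial * ((2 * s + j + 1) * Gamma (2 * s + j + 1)))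
        = ((j + 1) * (2 * s + j + 1)) * (j.factorial * Gamma (2 * s + j + 1)) by push_cast; ring,
      mul_inv, ← mul_assoc, mul_inv_cancel₀ (mul_ne_zero (Nat.cast_add_one_ne_zero j) hz), one_mul]

theorem entireCoeffs_bcoef (s : ℂ) : EntireCoeffs (bcoef s) :=
  .of_recurrence (bcoef_recurrence s)

theorem Gp_eq_cpow_mul_powSeries {x : ℝ} (hx : 0 < x) (s : ℂ) :
    Gp x s = (x : ℂ) ^ s * powSeries (bcoef s) x := by
  rw [Gp, powSeries, ← tsum_mul_left]
  refine tsum_congr fun j => ?_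
  rw [cpow_add _ _ (ofReal_ne_zero.2 hx.ne'), cpow_natCast]
  ring

theorem isYukawaSolution_Gp (s : ℂ) : IsYukawaSolution s (Gp · s) :=
  (isYukawaSolution_cpow_mul_powSeries (entireCoeffs_bcoef s) (bcoef_recurrence s)).congr
    fun _ hx => (Gp_eq_cpow_mul_powSeries hx s).symm

theorem isYukawaSolution_Gm (s : ℂ) : IsYukawaSolution s (Gm · s) :=
  (isYukawaSolution_Gp (-s)).of_neg

theorem norm_Gp_sub_le {s : ℂ} (hre : s.re = 0) {x : ℝ} (hx : 0 < x) (hx1 : x ≤ 1) :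
    ‖Gp x s - bcoef s 0 * (x : ℂ) ^ s‖ ≤ (∑' j, ‖bcoef s (j + 1)‖) * x := by
  rw [Gp_eq_cpow_mul_powSeries hx, mul_comm (bcoef s 0), ← mul_sub, norm_mul,
    norm_cpow_eq_rpow_re_of_pos hx, hre, Real.rpow_zero, one_mul]
  simpa only [abs_of_pos hx] using
    norm_powSeries_sub_le (entireCoeffs_bcoef s) (x := x) (by rwa [abs_of_pos hx])

theorem uScat_scattering_solution_general (s : ℂ) (hre : s.re = 0) (hG : Gp 1 s ≠ 0) :
    (∃ u' u'' : ℝ → ℂ,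
      (∀ x : ℝ, 0 < x → HasDerivAt (uScat s) (u' x) x) ∧
      (∀ x : ℝ, 0 < x → HasDerivAt u' (u'' x) x) ∧
      (∀ x : ℝ, 0 < x →
        (x : ℂ) ^ 2 * u'' x + (x : ℂ) * u' x - ((x : ℂ) + s ^ 2) * uScat s x = 0)) ∧
    uScat s 1 = 0 ∧
    ∃ C : ℝ, 0 ≤ C ∧ ∀ x : ℝ, 0 < x → x ≤ 1 →
      ‖uScat s x - (x : ℂ) ^ (-s) - Syu s * (x : ℂ) ^ s‖ ≤ C * x := by
  have hre' : (-s).re = 0 := by simp [hre]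
  have hΓp : Gamma (1 + 2 * s) ≠ 0 := Gamma_ne_zero_of_re_pos (by simp [hre])
  have hΓm : Gamma (1 - 2 * s) ≠ 0 := Gamma_ne_zero_of_re_pos (by simp [hre])
  refine ⟨(isYukawaSolution_Gm s).const_mul_add_const_mul _ _ (isYukawaSolution_Gp s), ?_, ?_⟩
  · rw [uScat, Syu]
    field_simp
    ring
  set A := Gamma (1 - 2 * s)
  set B := Syu s * Gamma (1 + 2 * s)
  refine ⟨‖A‖ * ∑' j, ‖bcoef (-s) (j + 1)‖ + ‖B‖ * ∑' j, ‖bcoef s (j + 1)‖, by positivity,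
    fun x hx hx1 => ?_⟩
  have hsplit : uScat s x - (x : ℂ) ^ (-s) - Syu s * (x : ℂ) ^ s
      = A * (Gm x s - bcoef (-s) 0 * (x : ℂ) ^ (-s))
        + B * (Gp x s - bcoef s 0 * (x : ℂ) ^ s) := by
    rw [bcoef_zero, bcoef_zero, uScat, mul_neg, ← sub_eq_add_neg]
    linear_combination
      (x : ℂ) ^ (-s) * mul_inv_cancel₀ hΓm + Syu s * (x : ℂ) ^ s * mul_inv_cancel₀ hΓp
  calc _ ≤ ‖A‖ * ‖Gm x s - bcoef (-s) 0 * (x : ℂ) ^ (-s)‖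
        + ‖B‖ * ‖Gp x s - bcoef s 0 * (x : ℂ) ^ s‖ := by
        rw [hsplit, ← norm_mul, ← norm_mul]; exact norm_add_le _ _
    _ ≤ _ := by
        rw [add_mul, mul_assoc, mul_assoc]
        gcongr
        exacts [norm_Gp_sub_le hre' hx hx1, norm_Gp_sub_le hre hx hx1]

/-- for `Re s = 0`, `s ≠ 0`, `G_+(1,s) ≠ 0`, the function `u = uScat s`
solves the Yukawa equation on `(0,∞)`, satisfies `u(1) = 0`, and
`u(x) = x^{−s} + S(s)x^{s} + O(x)` on `(0,1]`. -/
theorem uScat_scattering_solution (s : ℂ) (hre : s.re = 0) (hs : s ≠ 0)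
    (hG : Gp 1 s ≠ 0) :
    (∃ u' u'' : ℝ → ℂ,
      (∀ x : ℝ, 0 < x → HasDerivAt (uScat s) (u' x) x) ∧
      (∀ x : ℝ, 0 < x → HasDerivAt u' (u'' x) x) ∧
      (∀ x : ℝ, 0 < x →
        (x : ℂ) ^ 2 * u'' x + (x : ℂ) * u' x - ((x : ℂ) + s ^ 2) * uScat s x = 0)) ∧
    uScat s 1 = 0 ∧
    ∃ C : ℝ, 0 ≤ C ∧ ∀ x : ℝ, 0 < x → x ≤ 1 →
      ‖uScat s x - (x : ℂ) ^ (-s) - Syu s * (x : ℂ) ^ s‖ ≤ C * x :=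
  uScat_scattering_solution_general s hre hG
end

section
/- Let τ ∈ ℝ, τ ≠ 0, and set s = iτ. If G_+(1,s) ≠ 0, then also G_−(1,s) ≠ 0 and the Yukawa scattering coefficient S(s) = −G_−(1,s)·Γ(1−2s)/(G_+(1,s)·Γ(1+2s)) satisfies |S(s)| = 1 (unitarity on the physical line Re s = 0). -/
/-! On the line `Re s = 0` complex conjugation acts as `s ↦ -s`. Since `bcoef` and `x ^ ·` (for
`x ≥ 0`) commute with conjugation, so does `G_+`, whence `G_-(1,s) = conj G_+(1,s)`; likewise
`Γ(1 - 2s) = conj Γ(1 + 2s)`. The numerator of `S(s)` is therefore, up to sign, the conjugate of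
its denominator, which is nonzero because `Re (1 + 2s) = 1 > 0`. -/

open ComplexConjugate

theorem conj_eq_neg_of_re_eq_zero {s : ℂ} (hs : s.re = 0) : conj s = -s :=
  Complex.ext (by simp [hs]) (by simp)

theorem bcoef_conj (s : ℂ) (j : ℕ) : bcoef (conj s) j = conj (bcoef s j) := by
  simp only [bcoef, map_inv₀, map_mul, Complex.conj_natCast, ← Complex.Gamma_conj, map_add,
    map_one, map_ofNat]

theorem Gp_conj {x : ℝ} (hx : 0 ≤ x) (s : ℂ) : Gp x (conj s) = conj (Gp x s) := by
  have harg : (x : ℂ).arg ≠ Real.pi := by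
    rw [Complex.arg_ofReal_of_nonneg hx]; exact Real.pi_ne_zero.symm
  rw [Gp, Gp, Complex.conj_tsum]
  congr 1 with j
  rw [map_mul, bcoef_conj, ← Complex.conj_natCast, ← map_add,
    Complex.cpow_conj _ _ harg, Complex.conj_ofReal]
  simp

theorem Gm_eq_conj_Gp {x : ℝ} (hx : 0 ≤ x) {s : ℂ} (hs : s.re = 0) :
    Gm x s = conj (Gp x s) := by
  rw [Gm, ← conj_eq_neg_of_re_eq_zero hs, Gp_conj hx]

theorem Gamma_one_sub_two_mul_eq_conj {s : ℂ} (hs : s.re = 0) :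
    Complex.Gamma (1 - 2 * s) = conj (Complex.Gamma (1 + 2 * s)) := by
  rw [← Complex.Gamma_conj, map_add, map_mul, map_one, map_ofNat,
    conj_eq_neg_of_re_eq_zero hs, mul_neg, sub_eq_add_neg]

theorem norm_Syu_eq_one {s : ℂ} (hs : s.re = 0) (hG : Gp 1 s ≠ 0) : ‖Syu s‖ = 1 := by
  have hΓ : Complex.Gamma (1 + 2 * s) ≠ 0 :=
    Complex.Gamma_ne_zero_of_re_pos (by simp [hs])
  rw [Syu, Gm_eq_conj_Gp zero_le_one hs, Gamma_one_sub_two_mul_eq_conj hs, neg_mul, norm_div,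
    norm_neg, norm_mul, norm_mul, Complex.norm_conj, Complex.norm_conj, div_self]
  exact mul_ne_zero (norm_ne_zero_iff.mpr hG) (norm_ne_zero_iff.mpr hΓ)

theorem Syu_unitary_on_physical_line_general (τ : ℝ)
    (hG : Gp 1 (Complex.I * (τ : ℂ)) ≠ 0) :
    Gm 1 (Complex.I * (τ : ℂ)) ≠ 0 ∧
    ‖Syu (Complex.I * (τ : ℂ))‖ = 1 := by
  have hre : (Complex.I * (τ : ℂ)).re = 0 := by simp
  refine ⟨?_, norm_Syu_eq_one hre hG⟩
  rw [Gm_eq_conj_Gp zero_le_one hre]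
  exact (map_ne_zero _).mpr hG

/-- unitarity on the physical line: for `s = iτ`, `τ ≠ 0`, with
`G_+(1,s) ≠ 0`, also `G_−(1,s) ≠ 0` and `|S(s)| = 1`. -/
theorem Syu_unitary_on_physical_line (τ : ℝ) (hτ : τ ≠ 0)
    (hG : Gp 1 (Complex.I * (τ : ℂ)) ≠ 0) :
    Gm 1 (Complex.I * (τ : ℂ)) ≠ 0 ∧
    ‖Syu (Complex.I * (τ : ℂ))‖ = 1 :=
  Syu_unitary_on_physical_line_general τ hG
end
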